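/- In the single-elite infinite-horizon problem, every optimal policy σ(s,p) ∈ argmax_{p'} [R(s,p') - c(p'-p) + β(π V(1,p') + (1-π) V(0,p'))] satisfies min(p, 1/2) ≤ σ(s,p) ≤ max(p, 1/2); equivalently |σ(s,p) - 1/2| ≤ |p - 1/2|. In particular σ(s, 1/2) = 1/2, i.e., the maximally polarized state p = 1/2 is absorbing. -/

import Mathlib

/-!
If `x` lies outside the interval between the current opinion `p` and `1/2`, then the endpoint `q`
of that interval nearest to `x` yields a weakly larger flow payoff and continuation value (both
are peaked at `1/2`) at a strictly smaller adjustment cost, since `|q - p| < |x - p|`. Hence no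
maximizer leaves the interval.
-/

open Set

/-- Current-period return: `R 1 p' = H·𝟙{p' ≥ 1/2}`, `R 0 p' = H·𝟙{p' ≤ 1/2}`. -/
noncomputable def Rret (H : ℝ) : Bool → ℝ → ℝ
  | true, p' => if (1 : ℝ) / 2 ≤ p' then H else 0
  | false, p' => if p' ≤ (1 : ℝ) / 2 then H else 0

/-- Bellman operator of the single-elite infinite-horizon problem. -/
noncomputable def Bell (c : ℝ → ℝ) (H β pr : ℝ) (v : Bool → ℝ → ℝ) (s : Bool) (p : ℝ) : ℝ :=
  sSup ((fun p' => Rret H s p' - c (p' - p) +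
      β * (pr * v true p' + (1 - pr) * v false p')) '' Set.Icc (0 : ℝ) 1)

section Cost

variable {c : ℝ → ℝ}

theorem Function.Even.lt_of_abs_lt (hc : Function.Even c) (hcmono : StrictMonoOn c (Ici 0))
    {u v : ℝ} (huv : |u| < |v|) : c u < c v := by
  have hc_abs : ∀ x, c |x| = c x := fun x => by
    rcases abs_choice x with h | h <;> rw [h]
    exact hc x
  rw [← hc_abs u, ← hc_abs v]
  exact hcmono (abs_nonneg u) (abs_nonneg v) huv

theorem not_isMaxOn_of_abs_sub_lt {g : ℝ → ℝ} {S : Set ℝ} {p q x : ℝ}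
    (hc : Function.Even c) (hcmono : StrictMonoOn c (Ici 0))
    (hq : q ∈ S) (hg : g x ≤ g q) (hqx : |q - p| < |x - p|) :
    ¬ IsMaxOn (fun y => g y - c (y - p)) S x := fun hmax => by
  have hle := isMaxOn_iff.1 hmax q hq
  have hlt := hc.lt_of_abs_lt hcmono hqx
  linarith

theorem mem_uIcc_of_isMaxOn {g : ℝ → ℝ} {a m b p x : ℝ}
    (hc : Function.Even c) (hcmono : StrictMonoOn c (Ici 0))
    (hmono : MonotoneOn g (Icc a m)) (hanti : AntitoneOn g (Icc m b))
    (hp : p ∈ Icc a b) (hm : m ∈ Icc a b) (hx : x ∈ Icc a b)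
    (hmax : IsMaxOn (fun y => g y - c (y - p)) (Icc a b) x) :
    x ∈ uIcc p m := by
  refine ⟨le_of_not_gt fun hlt => ?_, le_of_not_gt fun hgt => ?_⟩
  · have hqp : min p m ≤ p := min_le_left p m
    have hqm : min p m ≤ m := min_le_right p m
    have haq : a ≤ min p m := le_min hp.1 hm.1
    have hq : min p m ∈ Icc a b := ⟨haq, hqp.trans hp.2⟩
    refine not_isMaxOn_of_abs_sub_lt hc hcmono hq
      (hmono ⟨hx.1, hlt.le.trans hqm⟩ ⟨haq, hqm⟩ hlt.le) ?_ hmax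
    rw [abs_of_nonpos (by linarith), abs_of_neg (by linarith)]
    linarith
  · have hpq : p ≤ max p m := le_max_left p m
    have hmq : m ≤ max p m := le_max_right p m
    have hqb : max p m ≤ b := max_le hp.2 hm.2
    have hq : max p m ∈ Icc a b := ⟨hp.1.trans hpq, hqb⟩
    refine not_isMaxOn_of_abs_sub_lt hc hcmono hq
      (hanti ⟨hmq, hqb⟩ ⟨hmq.trans hgt.le, hx.2⟩ hgt.le) ?_ hmax
    rw [abs_of_nonneg (by linarith), abs_of_pos (by linarith)]
    linarith

end Cost

section Payoff

variable {H : ℝ}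

theorem Rret_monotoneOn (hH : 0 ≤ H) (s : Bool) : MonotoneOn (Rret H s) (Iic (1 / 2)) := by
  intro x hx y hy hxy
  rw [mem_Iic] at hx hy
  cases s <;> simp only [Rret] <;> split_ifs <;> linarith

theorem Rret_antitoneOn (hH : 0 ≤ H) (s : Bool) : AntitoneOn (Rret H s) (Ici (1 / 2)) := by
  intro x hx y hy hxy
  rw [mem_Ici] at hx hy
  cases s <;> simp only [Rret] <;> split_ifs <;> linarith

variable {β pr : ℝ} {f₁ f₀ : ℝ → ℝ} {S : Set ℝ}

theorem MonotoneOn.discounted_mix (hβ : 0 ≤ β) (hpr : pr ∈ Icc (0 : ℝ) 1)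
    (h₁ : MonotoneOn f₁ S) (h₀ : MonotoneOn f₀ S) :
    MonotoneOn (fun y => β * (pr * f₁ y + (1 - pr) * f₀ y)) S := by
  intro x hx y hy hxy
  have hpr' : 0 ≤ 1 - pr := sub_nonneg.2 hpr.2
  dsimp only
  gcongr
  exacts [hpr.1, h₁ hx hy hxy, h₀ hx hy hxy]

theorem AntitoneOn.discounted_mix (hβ : 0 ≤ β) (hpr : pr ∈ Icc (0 : ℝ) 1)
    (h₁ : AntitoneOn f₁ S) (h₀ : AntitoneOn f₀ S) :
    AntitoneOn (fun y => β * (pr * f₁ y + (1 - pr) * f₀ y)) S := by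
  intro x hx y hy hxy
  have hpr' : 0 ≤ 1 - pr := sub_nonneg.2 hpr.2
  dsimp only
  gcongr
  exacts [hpr.1, h₁ hx hy hxy, h₀ hx hy hxy]

end Payoff

theorem polarization_pull
    (c : ℝ → ℝ) (H β pr : ℝ) (V : Bool → ℝ → ℝ) (σ : Bool → ℝ → ℝ)
    (hceven : ∀ x, c (-x) = c x)
    (hcmono : StrictMonoOn c (Set.Ici (0 : ℝ)))
    (hH : 0 < H) (hβ : β ∈ Set.Ioo (0 : ℝ) 1) (hpr : pr ∈ Set.Ioo (0 : ℝ) 1)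
    (hVpeak : ∀ s, MonotoneOn (V s) (Set.Icc (0 : ℝ) (1 / 2)) ∧
        AntitoneOn (V s) (Set.Icc (1 / 2 : ℝ) 1))
    (hσ : ∀ s, ∀ p ∈ Set.Icc (0 : ℝ) 1, σ s p ∈ Set.Icc (0 : ℝ) 1 ∧
        IsMaxOn (fun p' => Rret H s p' - c (p' - p) +
          β * (pr * V true p' + (1 - pr) * V false p')) (Set.Icc (0 : ℝ) 1) (σ s p)) :
    ∀ s, (∀ p ∈ Set.Icc (0 : ℝ) 1,
        min p (1 / 2) ≤ σ s p ∧ σ s p ≤ max p (1 / 2) ∧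
        |σ s p - 1 / 2| ≤ |p - 1 / 2|) ∧
      σ s (1 / 2) = 1 / 2 := by
  intro s
  have hpr' : pr ∈ Icc (0 : ℝ) 1 := Ioo_subset_Icc_self hpr
  have hmono := ((Rret_monotoneOn hH.le s).mono Icc_subset_Iic_self).add
    (MonotoneOn.discounted_mix hβ.1.le hpr' (hVpeak true).1 (hVpeak false).1)
  have hanti := ((Rret_antitoneOn hH.le s).mono Icc_subset_Ici_self).add
    (AntitoneOn.discounted_mix hβ.1.le hpr' (hVpeak true).2 (hVpeak false).2)
  have hmem : ∀ p ∈ Icc (0 : ℝ) 1, σ s p ∈ uIcc p (1 / 2) := fun p hp =>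
    mem_uIcc_of_isMaxOn hceven hcmono hmono hanti hp (by norm_num) (hσ s p hp).1
      (by simpa only [add_sub_right_comm] using (hσ s p hp).2)
  refine ⟨fun p hp => ⟨(hmem p hp).1, (hmem p hp).2, ?_⟩, ?_⟩
  · exact abs_sub_left_of_mem_uIcc (uIcc_comm p (1 / 2) ▸ hmem p hp)
  · simpa using hmem (1 / 2) (by norm_num)
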